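/- For the canonical action of the T-version forest-skein group G^T on the totally ordered set X of marked-leaf classes, the induced action on the set X_k of k-element subsets of X is transitive for every k ≥ 1. -/

import Mathlib

namespace ForestSkein

/-- A coloured finite rooted planar binary tree with colours in `S`. -/
inductive CTree (S : Type) : Type
  | leaf : CTree S
  | node : S → CTree S → CTree S → CTree S

namespace CTree

/-- Number of leaves of a coloured binary tree. -/
def leaves {S : Type} : CTree S → ℕ
  | .leaf => 1
  | .node _ l r => leaves l + leaves r

/-- Graft a list of trees onto the leaves of a tree (vertical stacking). -/
def graft {S : Type} : CTree S → List (CTree S) → CTree S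
  | .leaf, gs => gs.headD .leaf
  | .node c l r, gs => .node c (graft l (gs.take (leaves l))) (graft r (gs.drop (leaves l)))

/-- Relabel the colours of a tree along a map of colour sets. -/
def recolour {S S' : Type} (c : S → S') : CTree S → CTree S'
  | .leaf => .leaf
  | .node x l r => .node (c x) (recolour c l) (recolour c r)

end CTree

/-- A coloured forest: a finite list of coloured binary trees.  Its roots are the
entries of the list, its leaves are the leaves of its trees. -/
abbrev Forest (S : Type) := List (CTree S)

/-- Total number of leaves of a forest. -/
def Forest.leaves {S : Type} (f : Forest S) : ℕ := (f.map CTree.leaves).sum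

/-- Composition of forests: `Forest.comp f g` stacks `g` on top of `f`, attaching
the `j`-th root of `g` to the `j`-th leaf of `f` (meaningful when
`Forest.leaves f = g.length`). -/
def Forest.comp {S : Type} : Forest S → Forest S → Forest S
  | [], _ => []
  | t :: ts, g =>
      CTree.graft t (g.take (CTree.leaves t)) :: Forest.comp ts (g.drop (CTree.leaves t))

/-- The elementary forest `a_{j,n}` (1-indexed) with `n` roots, a single `a`-coloured
caret at the `j`-th root, and all other trees trivial. -/
def elemForest {S : Type} (a : S) (j n : ℕ) : Forest S :=
  List.replicate (j - 1) CTree.leaf ++ [CTree.node a CTree.leaf CTree.leaf] ++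
    List.replicate (n - j) CTree.leaf

/-- A set of skein relations consists of pairs of trees with equal numbers of leaves. -/
def LeafPres {S : Type} (R : CTree S → CTree S → Prop) : Prop :=
  ∀ t t' : CTree S, R t t' → CTree.leaves t = CTree.leaves t'

/-- The equivalence relation on coloured forests generated by a set `R` of skein
relations (pairs of trees), closed under composition and tensor product
(horizontal juxtaposition).  The quotient is the forest-skein category
presented by `R`. -/
inductive SkeinEquiv {S : Type} (R : CTree S → CTree S → Prop) : Forest S → Forest S → Prop
  | of {t t' : CTree S} : R t t' → SkeinEquiv R [t] [t']
  | refl (f : Forest S) : SkeinEquiv R f f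
  | symm {f g : Forest S} : SkeinEquiv R f g → SkeinEquiv R g f
  | trans {f g h : Forest S} : SkeinEquiv R f g → SkeinEquiv R g h → SkeinEquiv R f h
  | comp {f f' g g' : Forest S} :
      SkeinEquiv R f f' → SkeinEquiv R g g' → SkeinEquiv R (Forest.comp f g) (Forest.comp f' g')
  | tensor {f f' g g' : Forest S} :
      SkeinEquiv R f f' → SkeinEquiv R g g' → SkeinEquiv R (f ++ g) (f' ++ g')

/-- Left-cancellativity of a forest-skein category given by the equivalence `E` on
forests: `f ∘ g = f ∘ h` implies `g = h`. -/
def LeftCancel {S : Type} (E : Forest S → Forest S → Prop) : Prop :=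
  ∀ f g h : Forest S, Forest.leaves f = g.length → Forest.leaves f = h.length →
    E (Forest.comp f g) (Forest.comp f h) → E g h

/-- Ore's property for the forest-skein category given by the equivalence `E`:
any two forests with the same number of roots admit a common right multiple. -/
def OreProp {S : Type} (E : Forest S → Forest S → Prop) : Prop :=
  ∀ f g : Forest S, f.length = g.length →
    ∃ p q : Forest S, Forest.leaves f = p.length ∧ Forest.leaves g = q.length ∧
      E (Forest.comp f p) (Forest.comp g q)

/-- Equality of the fractions `t ∘ s⁻¹` and `t' ∘ s'⁻¹` in the fraction group:
there are forests `f, f'` with `t ∘ f = t' ∘ f'` and `s ∘ f = s' ∘ f'` modulo `E`. -/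
def FracRel {S : Type} (E : Forest S → Forest S → Prop) (t s t' s' : CTree S) : Prop :=
  ∃ f f' : Forest S, CTree.leaves t = f.length ∧ CTree.leaves t' = f'.length ∧
    E [CTree.graft t f] [CTree.graft t' f'] ∧ E [CTree.graft s f] [CTree.graft s' f']

/-- `leafPos f j` is the (0-indexed) index `j^f` of the first leaf of the `j`-th tree
of the forest `f` among all leaves of `f`. -/
def leafPos {S : Type} (f : Forest S) (j : ℕ) : ℕ := Forest.leaves (f.take j)

/-- Generating relation for the set `X` of marked-leaf classes `[t, j]`:
skein equivalence of the underlying trees, and growth `(t, j) ~ (t ∘ f, j^f)`. -/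
inductive MLRel {S : Type} (E : Forest S → Forest S → Prop) :
    CTree S × ℕ → CTree S × ℕ → Prop
  | skein {t t' : CTree S} {j : ℕ} : E [t] [t'] → MLRel E (t, j) (t', j)
  | grow (t : CTree S) (f : Forest S) (j : ℕ) (hf : CTree.leaves t = f.length) :
      MLRel E (t, j) (CTree.graft t f, leafPos f j)

/-- Equality of marked-leaf classes in `X`. -/
def MLEquiv {S : Type} (E : Forest S → Forest S → Prop) :
    CTree S × ℕ → CTree S × ℕ → Prop :=
  Relation.EqvGen (MLRel E)

/-- The total order `⪯` on marked leaves: `[t, j] ⪯ [t', j']` when for some pair of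
forests with `t ∘ f = t' ∘ f'` (modulo `E`) one has `j^f ≤ j'^{f'}`. -/
def MLLe {S : Type} (E : Forest S → Forest S → Prop) (p q : CTree S × ℕ) : Prop :=
  ∃ f f' : Forest S, CTree.leaves p.1 = f.length ∧ CTree.leaves q.1 = f'.length ∧
    E [CTree.graft p.1 f] [CTree.graft q.1 f'] ∧ leafPos f p.2 ≤ leafPos f' q.2

/-! Grow `t` by a forest so that its marked leaves land at positions `j₀ + iM` (`i < k`) of a
tree with `kM` leaves, where `M` bounds the number of leaves of both `t` and `t'`, and do the same
for `t'`: the two marked sets are then cyclic translates of each other, by `j'₀ - j₀` modulo `kM`.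
Such a forest exists because every strictly increasing `P : ℕ → ℕ` with `P 0 = 0` is the
leaf-position function of a forest of combs, and the prescribed positions extend to such a `P`,
the gap `M` between consecutive targets being at least the gap between the marked leaves. -/

namespace CTree

variable {S : Type}

theorem eq_leaf_of_isEmpty [IsEmpty S] (t : CTree S) : t = .leaf := by
  cases t with
  | leaf => rfl
  | node c _ _ => exact isEmptyElim c

theorem leaves_graft (t : CTree S) (gs : Forest S) (h : t.leaves = gs.length) :
    (t.graft gs).leaves = Forest.leaves gs := by
  induction t generalizing gs with
  | leaf =>
    obtain ⟨g, rfl⟩ : ∃ g, gs = [g] := List.length_eq_one_iff.1 h.symm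
    simp [graft, Forest.leaves]
  | node c l r ihl ihr =>
    simp only [leaves] at h
    rw [graft, leaves, ihl _ (by simp; omega), ihr _ (by simp; omega), Forest.leaves,
      Forest.leaves, Forest.leaves, ← List.sum_append, ← List.map_append, List.take_append_drop]

def comb (a : S) : ℕ → CTree S
  | 0 => .leaf
  | m + 1 => .node a .leaf (comb a m)

theorem leaves_comb (a : S) (m : ℕ) : (comb a m).leaves = m + 1 := by
  induction m with
  | zero => rfl
  | succ m ih => simp only [comb, leaves, ih]; omega

end CTree

open CTree

section LeafPositions

variable {S : Type}

theorem leafPos_length (f : Forest S) : leafPos f f.length = Forest.leaves f := by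
  simp [leafPos]

theorem leafPos_succ (f : Forest S) {z : ℕ} (hz : z < f.length) :
    leafPos f (z + 1) = leafPos f z + f[z].leaves := by
  rw [leafPos, leafPos, List.take_succ_eq_append_getElem hz]
  simp only [Forest.leaves, List.map_append, List.sum_append, List.map_singleton,
    List.sum_singleton]

theorem exists_forest_leafPos_eq (a : S) {P : ℕ → ℕ} (hP : StrictMono P) (hP0 : P 0 = 0)
    (n : ℕ) : ∃ f : Forest S, f.length = n ∧ ∀ z ≤ n, leafPos f z = P z := by
  refine ⟨(List.range n).map fun m => comb a (P (m + 1) - P m - 1), by simp, fun z hz => ?_⟩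
  induction z with
  | zero => simp [leafPos, Forest.leaves, hP0]
  | succ z ih =>
    have hlt : P z < P (z + 1) := hP z.lt_succ_self
    rw [leafPos_succ _ (by simpa using hz), ih (by omega)]
    simp only [List.getElem_map, List.getElem_range, leaves_comb]
    omega

end LeafPositions

section Interpolation

def supOffset (C : Finset (ℕ × ℕ)) (z : ℕ) : ℕ :=
  {p ∈ C | p.1 ≤ z}.sup fun p => p.2 - p.1

theorem monotone_supOffset (C : Finset (ℕ × ℕ)) : Monotone (supOffset C) := fun _ _ h =>
  Finset.sup_mono (Finset.monotone_filter_right C fun _ _ hp => hp.trans h)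

theorem supOffset_of_mem {C : Finset (ℕ × ℕ)}
    (hC : ∀ p ∈ C, ∀ q ∈ C, p.1 ≤ q.1 → p.2 - p.1 ≤ q.2 - q.1) {q : ℕ × ℕ} (hq : q ∈ C) :
    supOffset C q.1 = q.2 - q.1 :=
  le_antisymm (Finset.sup_le fun p hp => (Finset.mem_filter.1 hp).elim (hC p · q hq))
    (Finset.le_sup (f := fun p : ℕ × ℕ => p.2 - p.1) (Finset.mem_filter.2 ⟨hq, le_rfl⟩))

theorem exists_strictMono_extending (C : Finset (ℕ × ℕ)) (hle : ∀ p ∈ C, p.1 ≤ p.2)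
    (hC : ∀ p ∈ C, ∀ q ∈ C, p.1 ≤ q.1 → p.2 - p.1 ≤ q.2 - q.1)
    (h0 : ∀ p ∈ C, p.1 = 0 → p.2 = 0) :
    ∃ P : ℕ → ℕ, StrictMono P ∧ P 0 = 0 ∧ ∀ p ∈ C, P p.1 = p.2 := by
  refine ⟨fun z => z + supOffset C z, strictMono_id.add_monotone (monotone_supOffset C), ?_,
    fun p hp => ?_⟩
  · refine (zero_add _).trans (Nat.eq_zero_of_le_zero (Finset.sup_le fun p hp => ?_))
    obtain ⟨hp, hp0⟩ := Finset.mem_filter.1 hp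
    simp [h0 p hp (Nat.eq_zero_of_le_zero hp0)]
  · have := hle p hp
    simp only [supOffset_of_mem hC hp]
    omega

end Interpolation

theorem Fin.val_mul_add_le_mul {k : ℕ} (i : Fin (k + 1)) (M : ℕ) : i * M + M ≤ (k + 1) * M := by
  simpa [add_mul] using Nat.mul_le_mul_right M (Nat.le_of_lt_succ i.isLt)

theorem exists_forest_leafPos_eq_add_mul {S : Type} (a : S) {n k M : ℕ} (j : Fin (k + 1) → ℕ)
    (hj : StrictMono j) (hjn : ∀ i, j i < n) (hM : n ≤ M) :
    ∃ f : Forest S, f.length = n ∧ Forest.leaves f = (k + 1) * M ∧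
      ∀ i, leafPos f (j i) = j 0 + i * M := by
  classical
  have hgap : ∀ i i' : Fin (k + 1), i ≤ i' → j i' + i * M ≤ j i + i' * M := by
    intro i i' h
    rcases h.eq_or_lt with rfl | h
    · rfl
    · have : i * M + M ≤ i' * M := by
        simpa [add_mul] using Nat.mul_le_mul_right M (Fin.lt_def.1 h)
      have := hjn i'
      omega
  have hmark : ∀ i, j i ≤ j 0 + i * M := fun i => by simpa using hgap 0 i (Fin.zero_le i)
  -- `(n, (k + 1) * M)` makes the gap from the last mark around to the first one `M` as well
  let C : Finset (ℕ × ℕ) :=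
    insert (n, (k + 1) * M) (Finset.univ.image fun i => (j i, j 0 + i * M))
  have hCle : ∀ p ∈ C, p.1 ≤ p.2 := by
    simp only [C, Finset.forall_mem_insert, Finset.forall_mem_image, Finset.mem_univ,
      forall_const]
    exact ⟨hM.trans (Nat.le_mul_of_pos_left M k.succ_pos), hmark⟩
  have hCgap : ∀ p ∈ C, ∀ q ∈ C, p.1 ≤ q.1 → p.2 - p.1 ≤ q.2 - q.1 := by
    simp only [C, Finset.forall_mem_insert, Finset.forall_mem_image, Finset.mem_univ,
      forall_const]
    refine ⟨⟨fun _ => le_rfl, fun i h => absurd h (hjn i).not_ge⟩, fun i => ⟨fun _ => ?_,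
      fun i' h => ?_⟩⟩
    · have := Fin.val_mul_add_le_mul i M
      have := hj.monotone (Fin.zero_le i)
      have := hmark i
      have := hjn i
      omega
    · have := hgap i i' (hj.le_iff_le.1 h); have := hmark i
      omega
  have hC0 : ∀ p ∈ C, p.1 = 0 → p.2 = 0 := by
    simp only [C, Finset.forall_mem_insert, Finset.forall_mem_image, Finset.mem_univ,
      forall_const]
    refine ⟨fun h => absurd h (hjn 0).ne_bot, fun i hi => ?_⟩
    have hi0 : i = 0 := le_antisymm (hj.le_iff_le.1 (by omega)) (Fin.zero_le i)
    subst hi0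
    simp [hi]
  obtain ⟨P, hP, hP0, hPC⟩ := exists_strictMono_extending C hCle hCgap hC0
  obtain ⟨f, hfn, hfP⟩ := exists_forest_leafPos_eq a hP hP0 n
  refine ⟨f, hfn, ?_, fun i => ?_⟩
  · rw [← leafPos_length, hfn, hfP n le_rfl]
    exact hPC _ (Finset.mem_insert_self _ _)
  · rw [hfP _ (hjn i).le]
    exact hPC _ (Finset.mem_insert_of_mem (Finset.mem_image_of_mem _ (Finset.mem_univ i)))

theorem GT_transitive_on_subsets_general {S : Type} :
    ∀ k : ℕ, 1 ≤ k → ∀ (t t' : CTree S) (j j' : Fin k → ℕ),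
      StrictMono j → StrictMono j' →
      (∀ i, j i < CTree.leaves t) → (∀ i, j' i < CTree.leaves t') →
      ∃ (f f' : Forest S) (c : ℕ),
        CTree.leaves t = f.length ∧ CTree.leaves t' = f'.length ∧
        CTree.leaves (CTree.graft t f) = CTree.leaves (CTree.graft t' f') ∧
        ∀ i : Fin k,
          (leafPos f (j i) + c) % CTree.leaves (CTree.graft t f) = leafPos f' (j' i) := by
  intro k hk t t' j j' hj hj' hjt hjt'
  obtain ⟨k, rfl⟩ : ∃ m, k = m + 1 := ⟨k - 1, by omega⟩
  rcases isEmpty_or_nonempty S with hS | ⟨⟨a⟩⟩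
  · obtain rfl := t.eq_leaf_of_isEmpty
    obtain rfl := t'.eq_leaf_of_isEmpty
    refine ⟨[.leaf], [.leaf], 0, rfl, rfl, rfl, fun i => ?_⟩
    simp only [leaves, Nat.lt_one_iff] at hjt hjt'
    simp [hjt, hjt', leafPos, Forest.leaves]
  · set M := t.leaves + t'.leaves
    obtain ⟨f, hfn, hf, hfj⟩ := exists_forest_leafPos_eq_add_mul a j hj hjt (M := M) (by omega)
    obtain ⟨f', hf'n, hf', hf'j⟩ :=
      exists_forest_leafPos_eq_add_mul a j' hj' hjt' (M := M) (by omega)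
    have hN : (t.graft f).leaves = (k + 1) * M := (leaves_graft t f hfn.symm).trans hf
    refine ⟨f, f', j' 0 + (k + 1) * M - j 0, hfn.symm, hf'n.symm,
      by rw [hN, leaves_graft t' f' hf'n.symm, hf'], fun i => ?_⟩
    have := Fin.val_mul_add_le_mul i M
    have := hjt 0
    have := hjt' 0
    rw [hN, hfj, hf'j,
      show j 0 + i * M + (j' 0 + (k + 1) * M - j 0) = j' 0 + i * M + (k + 1) * M by omega,
      Nat.add_mod_right, Nat.mod_eq_of_lt (by omega)]

/-- the action of the `T`-version forest-skein group `G^T` on the set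
`X_k` of `k`-element subsets of `X` is transitive for every `k ≥ 1`: any two
`k`-tuples of marked leaves `{[t, j_1] < ⋯ < [t, j_k]}` and
`{[t', j'_1] < ⋯ < [t', j'_k]}` are matched by an element
`(t' ∘ f') ∘ σ ∘ (t ∘ f)⁻¹` of `G^T` with `σ` a cyclic rotation. -/
theorem GT_transitive_on_subsets {S : Type} (R : CTree S → CTree S → Prop)
    (hR : LeafPres R)
    (hLC : LeftCancel (SkeinEquiv R)) (hOre : OreProp (SkeinEquiv R)) :
    ∀ k : ℕ, 1 ≤ k → ∀ (t t' : CTree S) (j j' : Fin k → ℕ),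
      StrictMono j → StrictMono j' →
      (∀ i, j i < CTree.leaves t) → (∀ i, j' i < CTree.leaves t') →
      ∃ (f f' : Forest S) (c : ℕ),
        CTree.leaves t = f.length ∧ CTree.leaves t' = f'.length ∧
        CTree.leaves (CTree.graft t f) = CTree.leaves (CTree.graft t' f') ∧
        ∀ i : Fin k,
          (leafPos f (j i) + c) % CTree.leaves (CTree.graft t f) = leafPos f' (j' i) :=
  GT_transitive_on_subsets_general

end ForestSkein
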